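/- Let σ and w be unit vectors in ℂ^N with ⟨w,σ⟩ = ⟨σ,w⟩ = x for some real 0 < x < 1, and let E > 0 be real. Let H' = E·(|σ⟩⟨σ| + |w⟩⟨w|). Then at time t = π/(2Ex), exp(−iH't)·σ = −i·e^{−iπ/(2x)}·w; in particular, exp(−iH't)·σ equals w up to a phase factor of modulus 1. -/

import Mathlib

/-!
The operator `|σ⟩⟨σ| + |w⟩⟨w|` has the eigenvectors `σ ± w` with eigenvalues `1 ± x`. Writing
`σ = ((σ + w) + (σ - w)) / 2`, at time `t = π/(2Ex)` the two components pick up the phases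
`e^{-iπ/(2x)} e^{∓iπ/2}`, which are opposite, so the `σ`-parts cancel and `-i e^{-iπ/(2x)} w`
remains.
-/

open scoped InnerProductSpace

/-- The outer product |u⟩⟨v| : the rank-one operator sending φ to ⟨v,φ⟩·u
(inner product conjugate-linear in the first argument). -/
noncomputable def outer {N : ℕ} (u v : EuclideanSpace ℂ (Fin N)) :
    EuclideanSpace ℂ (Fin N) →L[ℂ] EuclideanSpace ℂ (Fin N) :=
  ContinuousLinearMap.toSpanSingleton ℂ u ∘L (innerSL ℂ v)

open Complex

open scoped Real

theorem NormedSpace.exp_apply_of_apply_eq_smul {V : Type*} [NormedAddCommGroup V]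
    [NormedSpace ℂ V] [CompleteSpace V] {A : V →L[ℂ] V} {v : V} {c : ℂ} (h : A v = c • v) :
    NormedSpace.exp A v = Complex.exp c • v := by
  have hpow : ∀ n : ℕ, (A ^ n) v = c ^ n • v := by
    intro n
    induction n with
    | zero => simp
    | succ n ih => rw [pow_succ', mul_apply_eq_comp, ih, map_smul, h, smul_smul, pow_succ]
  have hA := (NormedSpace.exp_series_hasSum_exp' (𝕂 := ℂ) A).mapL (ContinuousLinearMap.apply ℂ V v)
  have hc := (NormedSpace.exp_series_hasSum_exp' (𝕂 := ℂ) c).smul_const v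
  simp only [ContinuousLinearMap.apply_apply, smul_apply, hpow, smul_smul] at hA
  rw [exp_eq_exp_ℂ]
  exact hA.unique (by simpa only [smul_eq_mul] using hc)

theorem NormedSpace.exp_apply_of_apply_add_of_apply_sub {V : Type*} [NormedAddCommGroup V]
    [NormedSpace ℂ V] [CompleteSpace V] {A : V →L[ℂ] V} {σ w : V} {a b : ℂ}
    (ha : A (σ + w) = a • (σ + w)) (hb : A (σ - w) = b • (σ - w)) :
    NormedSpace.exp A σ = (2⁻¹ : ℂ) • (Complex.exp a • (σ + w) + Complex.exp b • (σ - w)) := by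
  rw [← exp_apply_of_apply_eq_smul ha, ← exp_apply_of_apply_eq_smul hb, ← map_add, ← map_smul]
  congr 1
  module

theorem Complex.exp_neg_I_mul_add_pi_div_two (z : ℂ) :
    exp (-(I * (z + π / 2))) = -I * exp (-(I * z)) := by
  rw [show -(I * (z + π / 2)) = -(I * z) + -π / 2 * I by ring, exp_add,
    exp_neg_pi_div_two_mul_I, mul_comm]

theorem Complex.exp_neg_I_mul_sub_pi_div_two (z : ℂ) :
    exp (-(I * (z - π / 2))) = I * exp (-(I * z)) := by
  rw [show -(I * (z - π / 2)) = -(I * z) + π / 2 * I by ring, exp_add,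
    exp_pi_div_two_mul_I, mul_comm]

section TwoLevel

variable {N : ℕ} {σ w : EuclideanSpace ℂ (Fin N)}

theorem outer_apply (u v φ : EuclideanSpace ℂ (Fin N)) : outer u v φ = ⟪v, φ⟫_ℂ • u := rfl

theorem outer_add_outer_apply_add (hσ : ‖σ‖ = 1) (hw : ‖w‖ = 1) {x : ℂ} (hwσ : ⟪w, σ⟫_ℂ = x)
    (hσw : ⟪σ, w⟫_ℂ = x) : (outer σ σ + outer w w) (σ + w) = (1 + x) • (σ + w) := by
  simp only [add_apply, outer_apply, inner_add_right, hwσ, hσw, inner_self_eq_norm_sq_to_K, hσ, hw]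
  module

theorem outer_add_outer_apply_sub (hσ : ‖σ‖ = 1) (hw : ‖w‖ = 1) {x : ℂ} (hwσ : ⟪w, σ⟫_ℂ = x)
    (hσw : ⟪σ, w⟫_ℂ = x) : (outer σ σ + outer w w) (σ - w) = (1 - x) • (σ - w) := by
  simp only [add_apply, outer_apply, inner_sub_right, hwσ, hσw, inner_self_eq_norm_sq_to_K, hσ, hw]
  module

end TwoLevel

theorem stmt_3_general {N : ℕ} (σ w : EuclideanSpace ℂ (Fin N))
    (hσ : ‖σ‖ = 1) (hw : ‖w‖ = 1) (x : ℝ) (hx0 : 0 < x)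
    (hwσ : ⟪w, σ⟫_ℂ = (x : ℂ)) (hσw : ⟪σ, w⟫_ℂ = (x : ℂ))
    (E : ℝ) (hE : 0 < E)
    (H' : EuclideanSpace ℂ (Fin N) →L[ℂ] EuclideanSpace ℂ (Fin N))
    (hH' : H' = (E : ℂ) • (outer σ σ + outer w w))
    (t : ℝ) (ht : t = Real.pi / (2 * E * x)) :
    NormedSpace.exp ((-(Complex.I * (t : ℂ))) • H') σ =
        (-Complex.I * Complex.exp (-(Complex.I * ((Real.pi / (2 * x) : ℝ) : ℂ)))) • w ∧
      ‖-Complex.I * Complex.exp (-(Complex.I * ((Real.pi / (2 * x) : ℝ) : ℂ)))‖ = 1 := by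
  set θ : ℂ := ((Real.pi / (2 * x) : ℝ) : ℂ)
  obtain ⟨hphase_add, hphase_sub⟩ : -(I * t) * E * (1 + x) = -(I * (θ + π / 2)) ∧
      -(I * t) * E * (1 - x) = -(I * (θ - π / 2)) := by
    have hx : (x : ℂ) ≠ 0 := ofReal_ne_zero.mpr hx0.ne'
    have hE : (E : ℂ) ≠ 0 := ofReal_ne_zero.mpr hE.ne'
    simp only [θ, ht]
    push_cast
    constructor <;> field_simp
  have h_add : ((-(I * t)) • H') (σ + w) = (-(I * (θ + π / 2))) • (σ + w) := by
    rw [smul_apply, hH', smul_apply, outer_add_outer_apply_add hσ hw hwσ hσw, smul_smul, smul_smul,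
      hphase_add]
  have h_sub : ((-(I * t)) • H') (σ - w) = (-(I * (θ - π / 2))) • (σ - w) := by
    rw [smul_apply, hH', smul_apply, outer_add_outer_apply_sub hσ hw hwσ hσw, smul_smul, smul_smul,
      hphase_sub]
  refine ⟨?_, ?_⟩
  · rw [NormedSpace.exp_apply_of_apply_add_of_apply_sub h_add h_sub, exp_neg_I_mul_add_pi_div_two,
      exp_neg_I_mul_sub_pi_div_two]
    module
  · rw [norm_mul, norm_neg, norm_I, one_mul, ← mul_neg, ← ofReal_neg, norm_exp_I_mul_ofReal]

theorem stmt_3 {N : ℕ} (σ w : EuclideanSpace ℂ (Fin N))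
    (hσ : ‖σ‖ = 1) (hw : ‖w‖ = 1) (x : ℝ) (hx0 : 0 < x) (hx1 : x < 1)
    (hwσ : ⟪w, σ⟫_ℂ = (x : ℂ)) (hσw : ⟪σ, w⟫_ℂ = (x : ℂ))
    (E : ℝ) (hE : 0 < E)
    (H' : EuclideanSpace ℂ (Fin N) →L[ℂ] EuclideanSpace ℂ (Fin N))
    (hH' : H' = (E : ℂ) • (outer σ σ + outer w w))
    (t : ℝ) (ht : t = Real.pi / (2 * E * x)) :
    NormedSpace.exp ((-(Complex.I * (t : ℂ))) • H') σ =
        (-Complex.I * Complex.exp (-(Complex.I * ((Real.pi / (2 * x) : ℝ) : ℂ)))) • w ∧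
      ‖-Complex.I * Complex.exp (-(Complex.I * ((Real.pi / (2 * x) : ℝ) : ℂ)))‖ = 1 :=
  stmt_3_general σ w hσ hw x hx0 hwσ hσw E hE H' hH' t ht
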